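/- Let t = (q,g,R,q') be a transition of a timed automaton and α : X → ℕ a bound function such that α_x ≥ c for every constraint x # c occurring in the guard g. Then for every zone Z: Post(Closure_α(Z), t) ⊆ Closure_α(Post(Z, t)). -/

import Mathlib

attribute [local instance] Classical.propDecidable

noncomputable section

namespace TAform

/-! ### Weights `(≼, c)` with `c ∈ ℤ ∪ {∞}` -/

/-- Values in `ℤ ∪ {∞}`: `none` represents `∞`. -/
abbrev OVal := Option ℤ

/-- Addition on `ℤ ∪ {∞}`. -/
def ovAdd : OVal → OVal → OVal
  | some a, some b => some (a + b)
  | _, _ => none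

/-- Strict order on `ℤ ∪ {∞}`. -/
def ovLt : OVal → OVal → Prop
  | some a, some b => a < b
  | some _, none => True
  | none, _ => False

/-- A weight `(≼, c)`: `strict = true` means `≼` is `<`, `strict = false` means `≤`;
`val ∈ ℤ ∪ {∞}`. -/
structure Weight where
  strict : Bool
  val : OVal

/-- The weight `(<, ∞)`. -/
def winf : Weight := ⟨true, none⟩

/-- The weight `(≤, c)`. -/
def wle (c : ℤ) : Weight := ⟨false, some c⟩

/-- The weight `(<, c)`. -/
def wlt (c : ℤ) : Weight := ⟨true, some c⟩

/-- Addition: `(≼₁,c₁)+(≼₂,c₂) = (≼,c₁+c₂)` where `≼` is `<` iff `≼₁` or `≼₂` is `<`. -/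
def Weight.add (a b : Weight) : Weight := ⟨a.strict || b.strict, ovAdd a.val b.val⟩

/-- Order: `(≼₁,c₁) < (≼₂,c₂)` iff `c₁ < c₂`, or `c₁ = c₂`, `≼₁` is `<` and `≼₂` is `≤`. -/
def Weight.lt (a b : Weight) : Prop :=
  ovLt a.val b.val ∨ (a.val = b.val ∧ a.strict = true ∧ b.strict = false)

def Weight.le (a b : Weight) : Prop := Weight.lt a b ∨ a = b

/-- Minus: `−(≼,c) = (≼,−c)`. -/
def Weight.neg (w : Weight) : Weight := ⟨w.strict, Option.map (fun c => -c) w.val⟩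

/-- Floor: `⌊(<,c)⌋ = (≤,c−1)` and `⌊(≤,c)⌋ = (≤,c)`. -/
def Weight.floor (w : Weight) : Weight :=
  ⟨false, if w.strict then Option.map (fun c => c - 1) w.val else w.val⟩

/-- Ceiling (on integer-valued weights): `⌈(≤,c)⌉ = (≤,c)` and `⌈(<,c)⌉ = (<,c+1)`. -/
def Weight.ceil (w : Weight) : Weight :=
  if w.strict then ⟨true, Option.map (fun c => c + 1) w.val⟩ else w

/-- Maximum of two weights. -/
def Weight.max (a b : Weight) : Weight := if Weight.lt a b then b else a

/-- Satisfaction: `d ≼ c` for a real number `d` and a weight `(≼,c)`. -/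
def Weight.sat (w : Weight) (d : ℝ) : Prop :=
  match w.val with
  | none => True
  | some c => if w.strict then d < (c : ℝ) else d ≤ (c : ℝ)

/-! ### Distance graphs and their semantics -/

/-- Vertices: clocks of `X` together with the special vertex `x₀` (represented by `none`). -/
abbrev Vtx (X : Type*) := Option X

/-- A distance graph: a weight for every ordered pair of vertices.  The edge
`a →^{≼ c} b` represents the constraint `v b − v a ≼ c`. -/
abbrev DGraph (X : Type*) := Vtx X → Vtx X → Weight

/-- A clock valuation. -/
abbrev Val (X : Type*) := X → ℝ

/-- The valuation is nonnegative (clock valuations map into `ℝ≥0`). -/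
def Nonneg {X : Type*} (v : Val X) : Prop := ∀ x, 0 ≤ v x

/-- Extension of a valuation to all vertices, sending `x₀` to `0`. -/
def extV {X : Type*} (v : Val X) : Vtx X → ℝ
  | none => 0
  | some x => v x

/-- Semantics of a distance graph: the set of nonnegative clock valuations
(with `x₀ = 0`) satisfying all edge constraints. -/
def sem {X : Type*} (G : DGraph X) : Set (Val X) :=
  { v | Nonneg v ∧ ∀ a b, (G a b).sat (extV v b - extV v a) }

/-- Weight of the path `a :: l ++ [b]` in `G` (sum of the weights of its edges). -/
def pathWeight {X : Type*} (G : DGraph X) : Vtx X → List (Vtx X) → Vtx X → Weight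
  | a, [], b => G a b
  | a, c :: l, b => (G a c).add (pathWeight G c l b)

/-- `G` has only positive cycles: no cycle has weight at most `(<,0)`. -/
def OnlyPositiveCycles {X : Type*} (G : DGraph X) : Prop :=
  ∀ (a : Vtx X) (l : List (Vtx X)), ¬ (pathWeight G a l a).le (wlt 0)

/-- Canonical form: the weight of the edge from `a` to `b` is a lower bound of the
weights of all paths from `a` to `b`. -/
def PathCanonical {X : Type*} (G : DGraph X) : Prop :=
  ∀ (a b : Vtx X) (l : List (Vtx X)), (G a b).le (pathWeight G a l b)

/-- The weight `w` bounds the difference `v b − v a` over all `v ∈ S`. -/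
def Bounds {X : Type*} (S : Set (Val X)) (a b : Vtx X) (w : Weight) : Prop :=
  ∀ v ∈ S, w.sat (extV v b - extV v a)

/-- `G` is the canonical distance graph of the set `S`: it represents `S` and each of
its edge weights is the least weight bounding the corresponding difference over `S`
(equivalently, for sets defined by clock constraints, the lower bound of the weights
of paths between its endpoints). -/
def IsCanonGraph {X : Type*} (G : DGraph X) (S : Set (Val X)) : Prop :=
  sem G = S ∧ ∀ a b w, Bounds S a b w → (G a b).le w

/-- A zone: a set of valuations defined by a conjunction of constraints of the form
`x − y # c` or `x # c`, i.e. the set represented by some distance graph. -/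
def IsZone {X : Type*} (Z : Set (Val X)) : Prop := ∃ G : DGraph X, sem G = Z

/-! ### Regions and closure -/

/-- Region equivalence with respect to the bound function `α`: same integer parts
(or both above the bound), same set of clocks with zero fractional part, and the
same ordering of fractional parts of bounded clocks. -/
def regEq {X : Type*} (α : X → ℕ) (v w : Val X) : Prop :=
  (∀ x, ((α x : ℝ) < v x ∧ (α x : ℝ) < w x) ∨
    (⌊v x⌋ = ⌊w x⌋ ∧ (Int.fract (v x) = 0 ↔ Int.fract (w x) = 0))) ∧
  (∀ x y, v x ≤ (α x : ℝ) → v y ≤ (α y : ℝ) →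
    (Int.fract (v x) ≤ Int.fract (v y) ↔ Int.fract (w x) ≤ Int.fract (w y)))

/-- A region with respect to `α`: an equivalence class of region equivalence
(inside the nonnegative valuations). -/
def IsRegion {X : Type*} (α : X → ℕ) (R : Set (Val X)) : Prop :=
  ∃ v : Val X, Nonneg v ∧ R = { w | Nonneg w ∧ regEq α v w }

/-- Closure abstraction: the union of the regions (w.r.t. `α`) intersecting `S`. -/
def Closure {X : Type*} (α : X → ℕ) (S : Set (Val X)) : Set (Val X) :=
  ⋃₀ { R | IsRegion α R ∧ (R ∩ S).Nonempty }

/-! ### LU-bounds and the `Extra⁺_LU` extrapolation -/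

/-- `w > (≤, l)` where `l ∈ ℕ ∪ {−∞}` (`⊥` is `−∞`). -/
def gtLB (w : Weight) (l : WithBot ℕ) : Prop :=
  ∀ n : ℕ, l = (n : WithBot ℕ) → ovLt (some (n : ℤ)) w.val

/-- `−w > (≤, l)` where `l ∈ ℕ ∪ {−∞}`. -/
def negGtLB (w : Weight) (l : WithBot ℕ) : Prop :=
  ∃ c : ℤ, w.val = some c ∧ ∀ n : ℕ, l = (n : WithBot ℕ) → c < -(n : ℤ)

/-- The weight `(<, −u)` for `u ∈ ℕ ∪ {−∞}` (with `(<,∞)` when `u = −∞`). -/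
def wltNeg (u : WithBot ℕ) : Weight :=
  ⟨true, WithBot.recBotCoe none (fun n => some (-(n : ℤ))) u⟩

/-- The `Extra⁺_{LU}` extrapolation, applied edgewise to a distance graph `G`
(the canonical graph of a zone): `Z⁺_{xy} = (<,∞)` if `Z_{xy} > (≤,L_y)`, or
`−Z_{y0} > (≤,L_y)`, or `−Z_{x0} > (≤,U_x)` and `y ≠ x₀`;
`Z⁺_{x0} = (<,−U_x)` if `−Z_{x0} > (≤,U_x)`; and `Z⁺_{xy} = Z_{xy}` otherwise. -/
def extraLU {X : Type*} (L U : X → WithBot ℕ) (G : DGraph X) : DGraph X := fun a b =>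
  match a, b with
  | some x, some y =>
      if gtLB (G (some x) (some y)) (L y) ∨ negGtLB (G (some y) none) (L y) ∨
          negGtLB (G (some x) none) (U x)
      then winf else G (some x) (some y)
  | none, some y =>
      if gtLB (G none (some y)) (L y) ∨ negGtLB (G (some y) none) (L y)
      then winf else G none (some y)
  | some x, none =>
      if negGtLB (G (some x) none) (U x) then wltNeg (U x) else G (some x) none
  | none, none => G none none

/-! ### LU-preorder and its abstraction -/

/-- `l < r` where `l ∈ ℕ ∪ {−∞}` and `r : ℝ`. -/
def lbLtR (l : WithBot ℕ) (r : ℝ) : Prop := ∀ n : ℕ, l = (n : WithBot ℕ) → (n : ℝ) < r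

/-- The LU-preorder `ν' ≼_{LU} ν`: for each clock `x`, either `ν' x = ν x`,
or `L x < ν' x < ν x`, or `U x < ν x < ν' x`. -/
def LUpre {X : Type*} (L U : X → WithBot ℕ) (ν' ν : Val X) : Prop :=
  ∀ x, ν' x = ν x ∨ (lbLtR (L x) (ν' x) ∧ ν' x < ν x) ∨ (lbLtR (U x) (ν x) ∧ ν x < ν' x)

/-- The abstraction `a_{≼LU}(W) = { ν | ∃ ν' ∈ W, ν' ≼_{LU} ν }` (inside the
nonnegative valuations). -/
def aLU {X : Type*} (L U : X → WithBot ℕ) (W : Set (Val X)) : Set (Val X) :=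
  { ν | Nonneg ν ∧ ∃ ν' ∈ W, LUpre L U ν' ν }

/-! ### Guards, transitions, timed automata -/

/-- Comparison operators `# ∈ {<, ≤, =, ≥, >}`. -/
inductive Cmp | lt | le | eq | ge | gt
deriving DecidableEq

/-- Satisfaction of a comparison by real numbers. -/
def Cmp.sat : Cmp → ℝ → ℝ → Prop
  | .lt, a, b => a < b
  | .le, a, b => a ≤ b
  | .eq, a, b => a = b
  | .ge, a, b => a ≥ b
  | .gt, a, b => a > b

/-- A clock constraint (guard): a conjunction (list) of constraints `x # c`, `c ∈ ℕ`. -/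
abbrev Guard (X : Type*) := List (X × Cmp × ℕ)

/-- `v ⊨ g`: every conjunct of the guard holds. -/
def gsat {X : Type*} (v : Val X) (g : Guard X) : Prop :=
  ∀ p ∈ g, Cmp.sat p.2.1 (v p.1) (p.2.2 : ℝ)

/-- `[R]v`: reset the clocks in `R` to `0`, leaving the others unchanged. -/
def resetVal {X : Type*} (R : Set X) (v : Val X) : Val X := Set.indicator Rᶜ v

/-- One step `ν →^{δ,t} ν'` for a transition with guard `g` and reset set `R`:
`ν + δ ⊨ g` and `ν' = [R](ν + δ)`. -/
def step {X : Type*} (g : Guard X) (R : Set X) (δ : ℝ) (ν ν' : Val X) : Prop :=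
  0 ≤ δ ∧ gsat (fun x => ν x + δ) g ∧ ν' = resetVal R (fun x => ν x + δ)

/-- `Post(S,t)`: all valuations reachable by the transition from valuations in `S`. -/
def Post {X : Type*} (g : Guard X) (R : Set X) (S : Set (Val X)) : Set (Val X) :=
  { ν' | ∃ ν ∈ S, ∃ δ : ℝ, step g R δ ν ν' }

/-- A timed automaton `(Q, q₀, X, T, Acc)`. -/
structure TimedAuto (Q X : Type*) where
  init : Q
  trans : Set (Q × Guard X × Set X × Q)
  acc : Set Q

/-- `(q,ν) →^{δ,t} (q',ν')` for a transition `t = (q,g,R,q')` of the automaton. -/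
def TimedAuto.cstep {Q X : Type*} (A : TimedAuto Q X) (t : Q × Guard X × Set X × Q)
    (δ : ℝ) (c c' : Q × Val X) : Prop :=
  t ∈ A.trans ∧ c.1 = t.1 ∧ c'.1 = t.2.2.2 ∧ step t.2.1 t.2.2.1 δ c.2 c'.2

/-! Region equivalence is a time-abstract bisimulation for transitions whose guard constants are
at most `α`: a delay `δ` of `v` is matched by a delay `δ'` of an equivalent `w` chosen so that
`δ'` cuts the circle of fractional parts of `w` where `δ` cuts that of `v`; such guards cannot
separate equivalent valuations, and resets preserve equivalence. So a successor of a point in a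
region meeting `Z` is equivalent to a successor of a point of `Z`. -/

section FloorFract

lemma cmp_eq_cmp_of_le_iff_le {α β : Type*} [LinearOrder α] [LinearOrder β] {a b : α} {c d : β}
    (h₁ : a ≤ b ↔ c ≤ d) (h₂ : b ≤ a ↔ d ≤ c) : cmp a b = cmp c d := by
  simp only [cmp, cmpUsing, lt_iff_le_not_ge, h₁, h₂]

lemma Cmp.sat_iff_of_cmp_eq {a b c d : ℝ} (op : Cmp) (h : cmp a c = cmp b d) :
    op.sat a c ↔ op.sat b d := by
  cases op
  · exact lt_iff_lt_of_cmp_eq_cmp h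
  · exact le_iff_le_of_cmp_eq_cmp h
  · exact eq_iff_eq_of_cmp_eq_cmp h
  · exact le_iff_le_of_cmp_eq_cmp (cmp_eq_cmp_symm.1 h)
  · exact lt_iff_lt_of_cmp_eq_cmp (cmp_eq_cmp_symm.1 h)

lemma eq_intCast_iff_floor_eq_and_fract_eq_zero {a : ℝ} {n : ℤ} :
    a = n ↔ ⌊a⌋ = n ∧ Int.fract a = 0 := by
  constructor
  · rintro rfl
    simp
  · rintro ⟨hfl, hfr⟩
    rw [← Int.floor_add_fract a, hfl, hfr, add_zero]

lemma cmp_intCast_eq_of_floor_eq {a b : ℝ} (hfl : ⌊a⌋ = ⌊b⌋)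
    (hfr : Int.fract a = 0 ↔ Int.fract b = 0) (n : ℤ) : cmp a n = cmp b n := by
  refine cmp_eq_cmp_of_le_iff_le ?_ ?_
  · simp only [le_iff_lt_or_eq, ← Int.floor_lt, eq_intCast_iff_floor_eq_and_fract_eq_zero, hfl,
      hfr]
  · rw [← Int.le_floor, ← Int.le_floor, hfl]

lemma fract_le_zero_iff {a : ℝ} : Int.fract a ≤ 0 ↔ Int.fract a = 0 :=
  (Int.fract_nonneg a).ge_iff_eq'

lemma floor_sub_eq_ite {a s : ℝ} (hs₀ : 0 ≤ s) (hs₁ : s < 1) :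
    ⌊a - s⌋ = if s ≤ Int.fract a then ⌊a⌋ else ⌊a⌋ - 1 := by
  have ha := Int.floor_add_fract a
  have := Int.fract_nonneg a
  have := Int.fract_lt_one a
  rw [Int.floor_eq_iff]
  split_ifs with h
  · constructor <;> linarith
  · push_cast
    constructor <;> linarith

lemma fract_sub_eq_ite {a s : ℝ} (hs₀ : 0 ≤ s) (hs₁ : s < 1) :
    Int.fract (a - s) = if s ≤ Int.fract a then Int.fract a - s else Int.fract a - s + 1 := by
  rw [← Int.self_sub_floor (a - s), floor_sub_eq_ite hs₀ hs₁, ← Int.self_sub_floor a]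
  split_ifs <;> push_cast <;> ring

lemma floor_sub_eq_floor_sub {a b s t : ℝ} (hs₀ : 0 ≤ s) (hs₁ : s < 1) (ht₀ : 0 ≤ t) (ht₁ : t < 1)
    (hfl : ⌊a⌋ = ⌊b⌋) (hst : s ≤ Int.fract a ↔ t ≤ Int.fract b) : ⌊a - s⌋ = ⌊b - t⌋ := by
  simp only [floor_sub_eq_ite hs₀ hs₁, floor_sub_eq_ite ht₀ ht₁, hfl, hst]

lemma fract_sub_eq_zero_iff {a s : ℝ} (hs₀ : 0 ≤ s) (hs₁ : s < 1) :
    Int.fract (a - s) = 0 ↔ Int.fract a = s := by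
  have := Int.fract_nonneg a
  rw [fract_sub_eq_ite hs₀ hs₁]
  split_ifs <;> constructor <;> intro <;> linarith

/-- Rotating by `-s` moves the fractional parts below `s` past all the others. -/
lemma fract_sub_le_fract_sub_iff {a b s : ℝ} (hs₀ : 0 ≤ s) (hs₁ : s < 1) :
    Int.fract (a - s) ≤ Int.fract (b - s) ↔
      (s ≤ Int.fract a ∧ Int.fract b < s) ∨
        ((s ≤ Int.fract a ↔ s ≤ Int.fract b) ∧ Int.fract a ≤ Int.fract b) := by
  have := Int.fract_nonneg a
  have := Int.fract_lt_one a
  have := Int.fract_nonneg b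
  have := Int.fract_lt_one b
  rw [fract_sub_eq_ite hs₀ hs₁, fract_sub_eq_ite hs₀ hs₁]
  split_ifs <;> grind

end FloorFract

section RegionEquivalence

variable {X : Type*} {α : X → ℕ} {v w : Val X}

lemma regEq.cmp_natCast_eq (h : regEq α v w) {x : X} {c : ℕ} (hc : c ≤ α x) :
    cmp (v x) c = cmp (w x) c := by
  rcases h.1 x with ⟨hv, hw⟩ | ⟨hfl, hfr⟩
  · have hc' : (c : ℝ) ≤ α x := by exact_mod_cast hc
    rw [(cmp_eq_gt_iff _ _).2 (by linarith), (cmp_eq_gt_iff _ _).2 (by linarith)]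
  · simpa using cmp_intCast_eq_of_floor_eq hfl hfr c

lemma regEq.le_iff (h : regEq α v w) (x : X) : v x ≤ α x ↔ w x ≤ α x :=
  le_iff_le_of_cmp_eq_cmp (h.cmp_natCast_eq le_rfl)

lemma regEq.floor_eq (h : regEq α v w) {x : X} (hx : v x ≤ α x) :
    ⌊v x⌋ = ⌊w x⌋ ∧ (Int.fract (v x) = 0 ↔ Int.fract (w x) = 0) :=
  (h.1 x).resolve_left fun hlt => hx.not_gt hlt.1

lemma regEq_refl (v : Val X) : regEq α v v :=
  ⟨fun _ => Or.inr ⟨rfl, Iff.rfl⟩, fun _ _ _ _ => Iff.rfl⟩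

lemma regEq.symm (h : regEq α v w) : regEq α w v :=
  ⟨fun x => (h.1 x).imp And.symm fun hx => ⟨hx.1.symm, hx.2.symm⟩,
    fun x y hx hy => (h.2 x y ((h.le_iff x).2 hx) ((h.le_iff y).2 hy)).symm⟩

lemma regEq.trans {u : Val X} (h₁ : regEq α u v) (h₂ : regEq α v w) : regEq α u w := by
  refine ⟨fun x => ?_, fun x y hx hy => ?_⟩
  · by_cases hx : u x ≤ α x
    · obtain ⟨hfl₁, hfr₁⟩ := h₁.floor_eq hx
      obtain ⟨hfl₂, hfr₂⟩ := h₂.floor_eq ((h₁.le_iff x).1 hx)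
      exact Or.inr ⟨hfl₁.trans hfl₂, hfr₁.trans hfr₂⟩
    · have hw : ¬ w x ≤ α x := by rwa [← h₂.le_iff, ← h₁.le_iff]
      exact Or.inl ⟨not_le.1 hx, not_le.1 hw⟩
  · exact (h₁.2 x y hx hy).trans (h₂.2 x y ((h₁.le_iff x).1 hx) ((h₁.le_iff y).1 hy))

lemma resetVal_apply (R : Set X) (v : Val X) (x : X) :
    resetVal R v x = if x ∈ R then 0 else v x := by
  by_cases hx : x ∈ R <;> simp [resetVal, hx]

lemma regEq.resetVal (h : regEq α v w) (R : Set X) :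
    regEq α (resetVal R v) (resetVal R w) := by
  refine ⟨fun x => ?_, fun x y hx hy => ?_⟩
  · by_cases hxR : x ∈ R
    · simp [resetVal_apply, hxR]
    · simpa [resetVal_apply, hxR] using h.1 x
  · by_cases hxR : x ∈ R
    · simp only [resetVal_apply, hxR, if_true, Int.fract_zero]
      exact iff_of_true (Int.fract_nonneg _) (Int.fract_nonneg _)
    by_cases hyR : y ∈ R
    · simp only [resetVal_apply, hxR, hyR, if_true, if_false, Int.fract_zero] at hx ⊢
      rw [fract_le_zero_iff, fract_le_zero_iff]
      exact (h.floor_eq hx).2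
    · simp only [resetVal_apply, hxR, hyR, if_false] at hx hy ⊢
      exact h.2 x y hx hy

lemma regEq.gsat (h : regEq α v w) {g : Guard X}
    (hα : ∀ (x : X) (cmp : Cmp) (c : ℕ), (x, cmp, c) ∈ g → c ≤ α x) (hv : gsat v g) :
    gsat w g := by
  rintro ⟨x, op, c⟩ hp
  exact (Cmp.sat_iff_of_cmp_eq op (h.cmp_natCast_eq (hα x op c hp))).1 (hv _ hp)

lemma Nonneg.of_step {g : Guard X} {R : Set X} {δ : ℝ} {v' : Val X} (hv : Nonneg v)
    (hstep : step g R δ v v') : Nonneg v' := by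
  obtain ⟨hδ, -, rfl⟩ := hstep
  intro x
  rw [resetVal_apply]
  split_ifs
  exacts [le_rfl, add_nonneg (hv x) hδ]

lemma mem_Closure_iff {S : Set (Val X)} :
    v ∈ Closure α S ↔ Nonneg v ∧ ∃ u ∈ S, Nonneg u ∧ regEq α v u := by
  constructor
  · rintro ⟨_, ⟨⟨r, -, rfl⟩, u, ⟨hu, hru⟩, huS⟩, hv, hrv⟩
    exact ⟨hv, u, huS, hu, hrv.symm.trans hru⟩
  · rintro ⟨hv, u, huS, hu, hvu⟩
    exact ⟨_, ⟨⟨v, hv, rfl⟩, u, ⟨hu, hvu⟩, huS⟩, hv, regEq_refl v⟩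

variable [Fintype X]

def fractPairs (α : X → ℕ) (v w : Val X) : Finset (ℝ × ℝ) :=
  insert (0, 0) (insert (1, 1) ((Finset.univ.filter fun x => v x ≤ α x).image
    fun x => (Int.fract (v x), Int.fract (w x))))

lemma regEq.cmp_fractPairs (h : regEq α v w) :
    ∀ p ∈ fractPairs α v w, ∀ q ∈ fractPairs α v w, cmp p.1 q.1 = cmp p.2 q.2 := by
  suffices hle : ∀ p ∈ fractPairs α v w, ∀ q ∈ fractPairs α v w, (p.1 ≤ q.1 ↔ p.2 ≤ q.2) from
    fun p hp q hq => cmp_eq_cmp_of_le_iff_le (hle p hp q hq) (hle q hq p hp)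
  simp only [fractPairs, Finset.mem_insert, Finset.mem_image, Finset.mem_filter,
    Finset.mem_univ, true_and]
  rintro _ (rfl | rfl | ⟨x, hx, rfl⟩) _ (rfl | rfl | ⟨y, hy, rfl⟩)
  all_goals first
    | exact Iff.rfl
    | exact h.2 x y hx hy
    | exact fract_le_zero_iff.trans ((h.floor_eq hx).2.trans fract_le_zero_iff.symm)
    | simp [(Int.fract_lt_one _).le, (Int.fract_lt_one _).not_ge]

/-- Write `δ = k - s` with `k ∈ ℤ` and `0 ≤ s < 1`, and take `δ' = k - t`, where `t` sits among
`0`, `1` and the fractional parts of the bounded clocks of `w` exactly as `s` sits among `0`, `1`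
and those of `v`. -/
lemma regEq.exists_add (h : regEq α v w) {δ : ℝ} (hδ : 0 ≤ δ) :
    ∃ δ', 0 ≤ δ' ∧ regEq α (fun x => v x + δ) (fun x => w x + δ') := by
  obtain ⟨k, s, hs₀, hs₁, rfl⟩ : ∃ (k : ℤ) (s : ℝ), 0 ≤ s ∧ s < 1 ∧ δ = k - s :=
    ⟨⌈δ⌉, ⌈δ⌉ - δ, by linarith [Int.le_ceil δ], by linarith [Int.ceil_lt_add_one δ], by ring⟩
  obtain ⟨t, ht⟩ := Order.PartialIso.exists_across ⟨fractPairs α v w, h.cmp_fractPairs⟩ s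
  have h₀ : cmp 0 s = cmp 0 t := ht (0, 0) (by simp [fractPairs])
  have h₁ : cmp 1 s = cmp 1 t := ht (1, 1) (by simp [fractPairs])
  have hcut : ∀ x, v x ≤ α x → cmp (Int.fract (v x)) s = cmp (Int.fract (w x)) t :=
    fun x hx => ht _ <| Finset.mem_insert_of_mem <| Finset.mem_insert_of_mem <|
      Finset.mem_image_of_mem _ (Finset.mem_filter.2 ⟨Finset.mem_univ x, hx⟩)
  have ht₀ : 0 ≤ t := (le_iff_le_of_cmp_eq_cmp h₀).1 hs₀
  have ht₁ : t < 1 := (lt_iff_lt_of_cmp_eq_cmp (cmp_eq_cmp_symm.1 h₁)).1 hs₁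
  have hδ' : 0 ≤ (k : ℝ) - t := by
    rcases le_or_gt 1 k with hk | hk
    · have : (1 : ℝ) ≤ k := by exact_mod_cast hk
      linarith
    · have hk : (k : ℝ) ≤ 0 := by exact_mod_cast Int.lt_add_one_iff.1 hk
      have ht : t ≤ 0 := (le_iff_le_of_cmp_eq_cmp (cmp_eq_cmp_symm.1 h₀)).1 (by linarith)
      linarith
  have hv : ∀ x, v x + (k - s) = v x - s + k := fun x => by ring
  have hw : ∀ x, w x + (k - t) = w x - t + k := fun x => by ring
  refine ⟨k - t, hδ', fun x => ?_, fun x y hx hy => ?_⟩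
  · by_cases hx : v x ≤ α x
    · right
      simp only [hv, hw, Int.floor_add_intCast, Int.fract_add_intCast, add_left_inj,
        fract_sub_eq_zero_iff hs₀ hs₁, fract_sub_eq_zero_iff ht₀ ht₁]
      exact ⟨floor_sub_eq_floor_sub hs₀ hs₁ ht₀ ht₁ (h.floor_eq hx).1
        (le_iff_le_of_cmp_eq_cmp (cmp_eq_cmp_symm.1 (hcut x hx))),
        eq_iff_eq_of_cmp_eq_cmp (hcut x hx)⟩
    · have hwx : ¬ w x ≤ α x := by rwa [← h.le_iff]
      left
      constructor <;> linarith [not_le.1 hx, not_le.1 hwx]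
  · have hx' : v x ≤ α x := by linarith
    have hy' : v y ≤ α y := by linarith
    simp only [hv, hw, Int.fract_add_intCast]
    rw [fract_sub_le_fract_sub_iff hs₀ hs₁, fract_sub_le_fract_sub_iff ht₀ ht₁,
      le_iff_le_of_cmp_eq_cmp (cmp_eq_cmp_symm.1 (hcut x hx')),
      le_iff_le_of_cmp_eq_cmp (cmp_eq_cmp_symm.1 (hcut y hy')),
      lt_iff_lt_of_cmp_eq_cmp (hcut y hy'), h.2 x y hx' hy']

lemma regEq.exists_step (h : regEq α v w) {g : Guard X} {R : Set X} {δ : ℝ} {v' : Val X}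
    (hα : ∀ (x : X) (cmp : Cmp) (c : ℕ), (x, cmp, c) ∈ g → c ≤ α x)
    (hstep : step g R δ v v') : ∃ δ' w', step g R δ' w w' ∧ regEq α v' w' := by
  obtain ⟨hδ, hg, rfl⟩ := hstep
  obtain ⟨δ', hδ', hreg⟩ := h.exists_add hδ
  exact ⟨δ', _, ⟨hδ', hreg.gsat hα hg, rfl⟩, hreg.resetVal R⟩

end RegionEquivalence

theorem stmt13_general {X : Type*} [Fintype X] (α : X → ℕ) (g : Guard X) (Rs : Set X)
    (hα : ∀ (x : X) (cmp : Cmp) (c : ℕ), (x, cmp, c) ∈ g → c ≤ α x)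
    (Z : Set (Val X)) :
    Post g Rs (Closure α Z) ⊆ Closure α (Post g Rs Z) := by
  rintro v' ⟨v, hv, δ, hstep⟩
  obtain ⟨hv₀, w, hwZ, hw₀, hvw⟩ := mem_Closure_iff.1 hv
  obtain ⟨δ', w', hwstep, hreg⟩ := hvw.exists_step hα hstep
  exact mem_Closure_iff.2 ⟨hv₀.of_step hstep, w', ⟨w, hwZ, δ', hwstep⟩, hw₀.of_step hwstep, hreg⟩

/-- If `α_x ≥ c` for every constraint `x # c` occurring in the guard
of `t`, then for every zone `Z`: `Post(Closure_α(Z), t) ⊆ Closure_α(Post(Z, t))`. -/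
theorem stmt13 {X : Type*} [Fintype X] (α : X → ℕ) (g : Guard X) (Rs : Set X)
    (hα : ∀ (x : X) (cmp : Cmp) (c : ℕ), (x, cmp, c) ∈ g → c ≤ α x)
    (Z : Set (Val X)) (hZ : IsZone Z) :
    Post g Rs (Closure α Z) ⊆ Closure α (Post g Rs Z) :=
  stmt13_general α g Rs hα Z

end TAform

end
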